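/- Let P ⊆ ℙ(V) be an irreducible Coxeter polytope of negative type with data (α_s, v_s)_{s∈S} and lift Δ, and suppose Δ ⊆ Σ_{s∈S} ℝ_{≥0}·v_s. Then every nonempty proper face f of P of negative type satisfies Δ ∩ Span f ⊆ Σ_{s∈S_f^⊥} ℝ_{≥0}·v_s; in particular, f ⊆ ℙ(Σ_{s∈S_f^⊥} ℝ_{≥0}·v_s ∖ {0}). -/

import Mathlib

/-!
Common definitions: Cartan matrices, Vinberg's Coxeter polytopes, faces,
the Hilbert metric and Busemann (Hausdorff) measure, reflection groups,
Vinberg domains, proximal limit sets, joins.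
-/

open scoped Classical LinearAlgebra.Projectivization Pointwise ENNReal
noncomputable section

/-- The quotient topology on a projective space. -/
instance projTop {K : Type*} [DivisionRing K] {V : Type*} [AddCommGroup V] [Module K V]
    [TopologicalSpace V] : TopologicalSpace (ℙ K V) :=
  inferInstanceAs (TopologicalSpace (Quotient (projectivizationSetoid K V)))

/-! ## Cartan matrices -/

/-- A Cartan matrix. -/
def IsCartanMatrix {S : Type*} (A : Matrix S S ℝ) : Prop :=
  (∀ s, A s s = 2) ∧
  (∀ s t, s ≠ t → A s t ≤ 0) ∧
  (∀ s t, s ≠ t → (A s t = 0 ↔ A t s = 0)) ∧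
  (∀ s t, s ≠ t →
    4 ≤ A s t * A t s ∨ ∃ k : ℕ, 2 ≤ k ∧ A s t * A t s = 4 * Real.cos (Real.pi / k) ^ 2)

/-- The graph on `S` with an edge `{s,t}` whenever `A s t ≠ 0` (`s ≠ t`). -/
def cartanGraph {S : Type*} (A : Matrix S S ℝ) : SimpleGraph S where
  Adj s t := s ≠ t ∧ (A s t ≠ 0 ∨ A t s ≠ 0)
  symm := ⟨fun _ _ h => ⟨h.1.symm, h.2.symm⟩⟩
  loopless := ⟨fun _ h => h.1 rfl⟩

/-- The principal submatrix of `A` with rows and columns in `T`. -/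
def submat {S : Type*} (A : Matrix S S ℝ) (T : Set S) : Matrix T T ℝ :=
  Matrix.of fun s t => A s t

/-- `T` is an irreducible component of `S` (for the matrix `A`): it is the
vertex set of a connected component of the graph of `A`. -/
def IsIrredComponent {S : Type*} (A : Matrix S S ℝ) (T : Set S) : Prop :=
  ∃ c : (cartanGraph A).ConnectedComponent, T = c.supp

/-- The spectral radius of a real matrix: the supremum of the moduli of its
complex eigenvalues. -/
def specRad {n : Type*} [Fintype n] [DecidableEq n] (M : Matrix n n ℝ) : ℝ :=
  sSup {r : ℝ | ∃ μ : ℂ, (M.map fun a => (a : ℂ)).charpoly.IsRoot μ ∧ r = ‖μ‖}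

/-- The Perron–Frobenius eigenvalue `λ_A = 2 - ρ(2·Id - A)` of a Cartan matrix. -/
def lambdaPF {n : Type*} [Fintype n] [DecidableEq n] (M : Matrix n n ℝ) : ℝ :=
  2 - specRad ((2 : ℝ) • (1 : Matrix n n ℝ) - M)

/-- A Cartan matrix is of positive type if all its irreducible components are. -/
def IsPosType {S : Type*} [Fintype S] (A : Matrix S S ℝ) : Prop :=
  ∀ T : Set S, IsIrredComponent A T → 0 < lambdaPF (submat A T)

/-- A Cartan matrix is of zero type if all its irreducible components are. -/
def IsZeroType {S : Type*} [Fintype S] (A : Matrix S S ℝ) : Prop :=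
  ∀ T : Set S, IsIrredComponent A T → lambdaPF (submat A T) = 0

/-- A Cartan matrix is of negative type if all its irreducible components are. -/
def IsNegType {S : Type*} [Fintype S] (A : Matrix S S ℝ) : Prop :=
  ∀ T : Set S, IsIrredComponent A T → lambdaPF (submat A T) < 0

/-- `T^⊥ = {s | A s t = 0 for all t ∈ T}`. -/
def perpSet {S : Type*} (A : Matrix S S ℝ) (T : Set S) : Set S :=
  {s | ∀ t ∈ T, A s t = 0}

/-- The union of those irreducible components `U` of `T` whose
Perron-Frobenius eigenvalue satisfies the predicate `p`. -/
def partOf {S : Type*} [Fintype S] (A : Matrix S S ℝ) (T : Set S) (p : ℝ → Prop) : Set S :=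
  {s | ∃ h : s ∈ T, ∃ U : Set T, IsIrredComponent (submat A T) U ∧ (⟨s, h⟩ : T) ∈ U ∧
    p (lambdaPF (submat (submat A T) U))}

/-! ## Projective geometry -/

variable {V : Type*} [NormedAddCommGroup V] [NormedSpace ℝ V]

/-- The image of a set `C ⊆ V` in projective space. -/
def projSet (C : Set V) : Set (ℙ ℝ V) :=
  {p | ∃ w ∈ C, ∃ hw : w ≠ 0, Projectivization.mk ℝ w hw = p}

/-- An open projective segment with endpoints `[a]` and `[b]`. -/
def openProjSeg (a b : V) : Set (ℙ ℝ V) :=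
  {p | ∃ u t : ℝ, 0 < u ∧ 0 < t ∧ ∃ h : u • a + t • b ≠ 0, Projectivization.mk ℝ _ h = p}

/-- `x ∼ y` iff `x = y` or some open projective segment contained in `P` contains both. -/
def faceRel (P : Set (ℙ ℝ V)) (x y : ℙ ℝ V) : Prop :=
  x = y ∨ ∃ a b : V, a ≠ 0 ∧ b ≠ 0 ∧ openProjSeg a b ⊆ P ∧
    x ∈ openProjSeg a b ∧ y ∈ openProjSeg a b

/-- The faces of `P` are the equivalence classes of `faceRel`. -/
def IsFace (P f : Set (ℙ ℝ V)) : Prop :=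
  ∃ x ∈ P, f = {y | y ∈ P ∧ faceRel P x y}

/-- The linear span of the cone over a subset of projective space. -/
def spanFace (f : Set (ℙ ℝ V)) : Submodule ℝ V :=
  Submodule.span ℝ {w : V | ∃ hw : w ≠ 0, Projectivization.mk ℝ w hw ∈ f}

/-- `F` is a facet (codimension-one face) of the closed convex set `K`. -/
def IsFacet (K F : Set (ℙ ℝ V)) : Prop :=
  ∃ g, IsFace K g ∧ Module.finrank ℝ (spanFace g) + 1 = Module.finrank ℝ (spanFace K) ∧
    F = closure g

/-- The affine chart of `ℙ(V)` associated with a linear functional `ξ`: a point `x` is sent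
to the representative `w` of `x` with `ξ w = 1` (junk if the line `x` lies in `ker ξ`). -/
def chartMap (ξ : V →ₗ[ℝ] ℝ) (x : ℙ ℝ V) : V :=
  (ξ x.rep)⁻¹ • x.rep

/-- The convex hull of a set `X ⊆ ℙ(V)`, computed in the affine chart of `ξ`. -/
def convexHullIn (ξ : V →ₗ[ℝ] ℝ) (X : Set (ℙ ℝ V))  : Set (ℙ ℝ V) :=
  projSet (convexHull ℝ (chartMap ξ '' X) \ {0})

/-- `ξ` defines an affine chart whose complementary hyperplane misses `Y`. -/
def ChartFor (ξ : V →ₗ[ℝ] ℝ) (Y : Set (ℙ ℝ V)) : Prop :=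
  ∀ x ∈ Y, ξ (Projectivization.rep x) ≠ 0

/-- A sharp open convex cone. -/
def IsPCCone {W : Type*} [NormedAddCommGroup W] [NormedSpace ℝ W] (C : Set W) : Prop :=
  IsOpen C ∧ Convex ℝ C ∧ C.Nonempty ∧ (∀ c : ℝ, 0 < c → ∀ x ∈ C, c • x ∈ C) ∧
    ∀ x : W, x ≠ 0 → ¬(x ∈ closure C ∧ -x ∈ closure C)

/-- A properly convex domain in `ℙ(V)`. -/
def IsPCDomain (Ω : Set (ℙ ℝ V)) : Prop :=
  ∃ C : Set V, IsPCCone C ∧ Ω = projSet (C \ {0})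

/-! ## Hilbert metric and Busemann measure -/

/-- The Hilbert distance on a properly convex domain `Ω`: the projective line through
`x ≠ y` is parametrized by `t ↦ [(1-t)·x̄ + t·ȳ]`; the intersection with `Ω` is the
interval `(sInf T, sSup T) ∋ 0, 1`, and `d(x,y) = ½ log [x':x:y:y']` for the
corresponding boundary points (the factor of an endpoint at infinity being `1`). -/
def hilbertDist (Ω : Set (ℙ ℝ V)) (x y : ℙ ℝ V) : ℝ :=
  if x = y then 0
  else
    (1 / 2) *
      Real.log
        ((if BddBelow {t : ℝ | ∃ h : (1 - t) • x.rep + t • y.rep ≠ 0,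
              Projectivization.mk ℝ _ h ∈ Ω} then
            (1 - sInf {t : ℝ | ∃ h : (1 - t) • x.rep + t • y.rep ≠ 0,
              Projectivization.mk ℝ _ h ∈ Ω}) /
            (0 - sInf {t : ℝ | ∃ h : (1 - t) • x.rep + t • y.rep ≠ 0,
              Projectivization.mk ℝ _ h ∈ Ω})
          else 1) *
         (if BddAbove {t : ℝ | ∃ h : (1 - t) • x.rep + t • y.rep ≠ 0,
              Projectivization.mk ℝ _ h ∈ Ω} then
            sSup {t : ℝ | ∃ h : (1 - t) • x.rep + t • y.rep ≠ 0,
              Projectivization.mk ℝ _ h ∈ Ω} /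
            (sSup {t : ℝ | ∃ h : (1 - t) • x.rep + t • y.rep ≠ 0,
              Projectivization.mk ℝ _ h ∈ Ω} - 1)
          else 1))

/-- The diameter of a set for a distance function. -/
def ediamWith {X : Type*} (ρ : X → X → ℝ) (U : Set X) : ℝ≥0∞ :=
  ⨆ p ∈ U, ⨆ q ∈ U, ENNReal.ofReal (ρ p q)

/-- The `d`-dimensional Hausdorff measure of `A` for the distance function `ρ`. -/
def hausdorffWith {X : Type*} (ρ : X → X → ℝ) (d : ℕ) (A : Set X) : ℝ≥0∞ :=
  ⨆ (δ : ℝ≥0∞) (_ : 0 < δ),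
    ⨅ (U : ℕ → Set X) (_ : A ⊆ ⋃ n, U n) (_ : ∀ n, ediamWith ρ (U n) ≤ δ),
      ∑' n, ediamWith ρ (U n) ^ d

/-- The Busemann measure of `A ∩ Ω`: the `d`-dimensional Hausdorff measure of `A ∩ Ω` in
the metric space `(Ω, d_Ω)`, where `d = dim ℙ(V) = dim V - 1`. -/
def busemann (Ω : Set (ℙ ℝ V)) (A : Set (ℙ ℝ V)) : ℝ≥0∞ :=
  hausdorffWith (fun p q : ↥Ω => hilbertDist Ω ↑p ↑q) (Module.finrank ℝ V - 1)
    {p : ↥Ω | ↑p ∈ A}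

/-! ## Linear actions on projective space, proximality -/

theorem unit_inj (g : (V →ₗ[ℝ] V)ˣ) : Function.Injective (g : V →ₗ[ℝ] V) := by
  intro x y h
  have h2 : ((g⁻¹ : (V →ₗ[ℝ] V)ˣ) : V →ₗ[ℝ] V) (((g : (V →ₗ[ℝ] V)ˣ) : V →ₗ[ℝ] V) x)
      = ((g⁻¹ : (V →ₗ[ℝ] V)ˣ) : V →ₗ[ℝ] V) (((g : (V →ₗ[ℝ] V)ˣ) : V →ₗ[ℝ] V) y) := by
    rw [h]
  rw [← Module.End.mul_apply, ← Module.End.mul_apply, ← Units.val_mul, inv_mul_cancel] at h2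
  simpa using h2

/-- The projective action of an invertible linear map. -/
def pAct (g : (V →ₗ[ℝ] V)ˣ) : ℙ ℝ V → ℙ ℝ V :=
  Projectivization.map (g : V →ₗ[ℝ] V) (unit_inj g)

/-- `g` is proximal with top eigenvalue `lam`: `lam` is a real eigenvalue of algebraic
multiplicity one whose modulus is the maximum of the moduli of the complex eigenvalues. -/
def IsProximalUnit [FiniteDimensional ℝ V] (g : (V →ₗ[ℝ] V)ˣ) (lam : ℝ) : Prop :=
  ((g : V →ₗ[ℝ] V)).charpoly.rootMultiplicity lam = 1 ∧
    ∀ μ : ℂ, (((g : V →ₗ[ℝ] V)).charpoly.map (algebraMap ℝ ℂ)).IsRoot μ → ‖μ‖ ≤ |lam|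

/-- The proximal limit set of a subgroup `Γ ≤ GL(V)`: the closure of the set of attracting
fixed points of the proximal elements of `Γ`. -/
def limitSet [FiniteDimensional ℝ V] (Γ : Subgroup (V →ₗ[ℝ] V)ˣ) : Set (ℙ ℝ V) :=
  closure {p | ∃ g ∈ Γ, ∃ lam : ℝ, IsProximalUnit g lam ∧
    ∃ w : V, ∃ hw : w ≠ 0, (g : V →ₗ[ℝ] V) w = lam • w ∧ Projectivization.mk ℝ w hw = p}

/-- A subgroup is large if it has a finite-index subgroup that surjects onto a
nonabelian free group. -/
def IsLarge {G : Type*} [Group G] (Γ : Subgroup G) : Prop :=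
  ∃ H : Subgroup ↥Γ, H.FiniteIndex ∧ ∃ φ : ↥H →* FreeGroup (Fin 2), Function.Surjective φ

/-! ## Coxeter polytopes -/

/-- A Coxeter polytope: a projective polytope `ℙ(Δ ∖ {0})`, where
`Δ = ⋂ₛ {α_s ≤ 0}` is a sharp polyhedral cone with nonempty interior, each `α_s`
defines a facet of it (facets being distinct for distinct `s`), together with polars
`v_s` such that `α_s (v_s) = 2` and `(α_s (v_t))_{s,t}` is a Cartan matrix. -/
structure CoxPolytope (S : Type*) (V : Type*) [NormedAddCommGroup V] [NormedSpace ℝ V] where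
  α : S → V →ₗ[ℝ] ℝ
  v : S → V
  pairing : ∀ s, α s (v s) = 2
  cartan : IsCartanMatrix (Matrix.of fun s t => α s (v t))
  int_nonempty : (interior (⋂ s, {x : V | α s x ≤ 0})).Nonempty
  sharp : ∀ x : V, x ≠ 0 → x ∈ ⋂ s, {x : V | α s x ≤ 0} → -x ∉ ⋂ s, {x : V | α s x ≤ 0}
  facet : ∀ s, ∃ x : V, α s x = 0 ∧ ∀ t, t ≠ s → α t x < 0

namespace CoxPolytope

variable {S : Type*} (CP : CoxPolytope S V)

/-- The Cartan matrix `A_P` of a Coxeter polytope. -/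
def A : Matrix S S ℝ := Matrix.of fun s t => CP.α s (CP.v t)

/-- The fundamental cone `Δ`. -/
def Δ : Set V := ⋂ s, {x : V | CP.α s x ≤ 0}

/-- The polytope `P = ℙ(Δ ∖ {0}) ⊆ ℙ(V)`. -/
def poly : Set (ℙ ℝ V) := projSet (CP.Δ \ {0})

/-- The reflection `σ_s = Id - α_s ⊗ v_s`. -/
def refl (s : S) : V →ₗ[ℝ] V := LinearMap.id - (CP.α s).smulRight (CP.v s)

/-- The reflection group `Γ_P ≤ GL(V)` generated by the reflections. -/
def reflGroup : Subgroup (V →ₗ[ℝ] V)ˣ :=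
  Subgroup.closure {g | ∃ s, (g : V →ₗ[ℝ] V) = CP.refl s}

/-- The Vinberg domain `Ω_P = Int (⋃_{γ ∈ Γ_P} γ·P)`. -/
def vinbergDomain : Set (ℙ ℝ V) :=
  interior (⋃ γ ∈ CP.reflGroup, pAct γ '' CP.poly)

/-- `S_f = {s ∈ S | f ⊆ ℙ(ker α_s)}`. -/
def SfaceSet (f : Set (ℙ ℝ V)) : Set S :=
  {s | ∀ w : V, ∀ hw : w ≠ 0, Projectivization.mk ℝ w hw ∈ f → CP.α s w = 0}

/-- The Cartan matrix `A_{S_f}` of a face. -/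
def faceMatrix (f : Set (ℙ ℝ V)) : Matrix (CP.SfaceSet f) (CP.SfaceSet f) ℝ :=
  submat CP.A (CP.SfaceSet f)

variable [Fintype S]

/-- A face is elliptic if `A_{S_f}` is of positive type. -/
def FaceElliptic (f : Set (ℙ ℝ V)) : Prop := IsPosType (CP.faceMatrix f)

/-- A face is of zero type if `A_{S_f}` is of zero type. -/
def FaceZero (f : Set (ℙ ℝ V)) : Prop := IsZeroType (CP.faceMatrix f)

/-- A face is of negative type if `A_{S_f}` is of negative type. -/
def FaceNeg (f : Set (ℙ ℝ V)) : Prop := IsNegType (CP.faceMatrix f)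

/-- A face is parabolic if `A_{S_f}` is of zero type of rank `dim V - dim (Span f) - 1`. -/
def FaceParabolic (f : Set (ℙ ℝ V)) : Prop :=
  IsZeroType (CP.faceMatrix f) ∧
    (CP.faceMatrix f).rank + Module.finrank ℝ (spanFace f) + 1 = Module.finrank ℝ V

/-- A Coxeter polytope is quasiperfect if every vertex is elliptic or parabolic. -/
def Quasiperfect : Prop :=
  ∀ f : Set (ℙ ℝ V), IsFace CP.poly f → Module.finrank ℝ (spanFace f) = 1 →
    CP.FaceElliptic f ∨ CP.FaceParabolic f

/-- A boundary face: a nonempty face of `P` contained in `∂Ω_P`. -/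
def BoundaryFace (f : Set (ℙ ℝ V)) : Prop :=
  IsFace CP.poly f ∧ f.Nonempty ∧ f ⊆ frontier CP.vinbergDomain

/-- A maximal boundary face. -/
def MaxBoundaryFace (f : Set (ℙ ℝ V)) : Prop :=
  CP.BoundaryFace f ∧ ∀ g, CP.BoundaryFace g → closure f ⊆ closure g → g = f

/-- A face `f` is perfect if every face `g` with `f ⊆ closure g` of dimension
`dim f + 1` is elliptic. -/
def PerfectFace (f : Set (ℙ ℝ V)) : Prop :=
  ∀ g, IsFace CP.poly g → f ⊆ closure g →
    Module.finrank ℝ (spanFace g) = Module.finrank ℝ (spanFace f) + 1 → CP.FaceElliptic g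

/-- A face is irreducible loxodromic if `A_{S_f}` is irreducible of negative type
and `rank A_{S_f} = dim V - dim (Span f)`. -/
def IrredLoxFace (f : Set (ℙ ℝ V)) : Prop :=
  (cartanGraph (CP.faceMatrix f)).Connected ∧ IsNegType (CP.faceMatrix f) ∧
    (CP.faceMatrix f).rank + Module.finrank ℝ (spanFace f) = Module.finrank ℝ V

/-- The cone `Σ_{s ∈ T} ℝ_{≥0}·v_s`. -/
def nonnegCone (T : Set S) : Set V :=
  {x | ∃ c : S → ℝ, (∀ s, 0 ≤ c s) ∧ (∀ s, s ∉ T → c s = 0) ∧ x = ∑ s, c s • CP.v s}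

/-- A minimal face of negative type. -/
def MinNegFace (f : Set (ℙ ℝ V)) : Prop :=
  IsFace CP.poly f ∧ f.Nonempty ∧ f ≠ interior CP.poly ∧ CP.FaceNeg f ∧
    ∀ g : Set (ℙ ℝ V), IsFace CP.poly g → g.Nonempty → closure g ⊂ closure f → ¬CP.FaceNeg g

/-- A face `f` is the join of the faces `F i`: the spans of the `F i` are independent
with sum `Span f`, and `Δ ∩ Span f = Σᵢ (Δ ∩ Span (F i))`. -/
def FaceIsJoin (f : Set (ℙ ℝ V)) {k : ℕ} (F : Fin k → Set (ℙ ℝ V)) : Prop :=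
  (∀ y : Fin k → V, (∀ i, y i ∈ spanFace (F i)) → (∑ i, y i) = 0 → ∀ i, y i = 0) ∧
  (⨆ i, spanFace (F i)) = spanFace f ∧
  CP.Δ ∩ (spanFace f : Set V) =
    {x | ∃ y : Fin k → V, (∀ i, y i ∈ CP.Δ ∩ (spanFace (F i) : Set V)) ∧ x = ∑ i, y i}

/-- A subset `S'` of `S` defines a face of `P`. -/
def DefinesFace (S' : Set S) : Prop :=
  ∃ x : V, (∀ s ∈ S', CP.α s x = 0) ∧ ∀ s ∉ S', CP.α s x < 0

end CoxPolytope

/-- `CP` is the join of the Coxeter polytopes `Q i ⊆ ℙ(W i)` along the decompositions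
`V = ⊕ᵢ W i` and `S = ⊔ᵢ (fibers of c)`. -/
def IsJoinData {S : Type*} {V : Type*} [NormedAddCommGroup V] [NormedSpace ℝ V]
    (CP : CoxPolytope S V) {k : ℕ} (W : Fin k → Submodule ℝ V) (c : S → Fin k)
    (Q : ∀ i : Fin k, CoxPolytope {s : S // c s = i} ↥(W i)) : Prop :=
  (∀ x : V, ∃ y : Fin k → V, (∀ i, y i ∈ W i) ∧ x = ∑ i, y i) ∧
  (∀ y : Fin k → V, (∀ i, y i ∈ W i) → (∑ i, y i) = 0 → ∀ i, y i = 0) ∧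
  (∀ s : S, CP.v s ∈ W (c s)) ∧
  (∀ s : S, ∀ i : Fin k, i ≠ c s → ∀ x : V, x ∈ W i → CP.α s x = 0) ∧
  (∀ i : Fin k, ∀ s : {s : S // c s = i},
    (∀ x : ↥(W i), (Q i).α s x = CP.α s.1 x) ∧ ((Q i).v s : V) = CP.v s.1)

/-- `Ω` is a join of the properly convex domains `Ω₁ ⊆ ℙ(E₁)` and `Ω₂ ⊆ ℙ(E₂)`. -/
def IsJoinOfDomains {V : Type*} [NormedAddCommGroup V] [NormedSpace ℝ V]
    (E₁ E₂ : Submodule ℝ V) (Ω₁ : Set (ℙ ℝ ↥E₁)) (Ω₂ : Set (ℙ ℝ ↥E₂))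
    (Ω : Set (ℙ ℝ V)) : Prop :=
  ∃ (C₁ : Set ↥E₁) (C₂ : Set ↥E₂), IsPCCone C₁ ∧ IsPCCone C₂ ∧
    Ω₁ = projSet (C₁ \ {0}) ∧ Ω₂ = projSet (C₂ \ {0}) ∧
    ∃ ε₁ ε₂ : Bool,
      Ω = projSet ({x : V | ∃ c₁ ∈ C₁, ∃ c₂ ∈ C₂,
        x = (cond ε₁ 1 (-1) : ℝ) • (c₁ : V) + (cond ε₂ 1 (-1) : ℝ) • (c₂ : V)} \ {0})

end

/-!
Write `x ∈ Δ ∩ Span f` as `x = Σ c_s v_s` with `c ≥ 0`. For `t ∈ S_f` we have `α_t(x) = 0`,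
i.e. `(A c)_t = 0`. On an irreducible component `U` of `S_f` the off-diagonal entries of `A`
are `≤ 0`, so `A_U c_U ≥ 0`; if `c_U ≠ 0`, connectedness makes `c_U` positive, and a positive
vector `b` with `(2·Id - A_U) b ≤ 2 b` forces `ρ(2·Id - A_U) ≤ 2`, i.e. `λ_{A_U} ≥ 0`,
contradicting negative type. Hence `c` vanishes on `S_f`, and each equation
`Σ_s A_{ts} c_s = 0` (`t ∈ S_f`) becomes a sum of nonpositive terms, so `c_s = 0` whenever
`A_{ts} ≠ 0`, that is, whenever `s ∉ S_f^⊥`.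
-/

open scoped Matrix

section CartanMatrix

variable {n : Type*} [Fintype n]

lemma Matrix.exists_mulVec_eq_smul_of_isRoot_charpoly {K : Type*} [Field K] [DecidableEq n]
    {M : Matrix n n K} {μ : K} (h : M.charpoly.IsRoot μ) : ∃ z ≠ 0, M *ᵥ z = μ • z := by
  rw [Polynomial.IsRoot, Matrix.eval_charpoly, ← Matrix.exists_mulVec_eq_zero_iff] at h
  obtain ⟨z, hz, hMz⟩ := h
  refine ⟨z, hz, ?_⟩
  rw [Matrix.sub_mulVec, sub_eq_zero] at hMz
  rw [← hMz]
  ext i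
  simp [Matrix.scalar_apply, Matrix.mulVec_diagonal]

lemma norm_le_of_mulVec_eq_smul {M : Matrix n n ℝ} (hM : ∀ i j, 0 ≤ M i j) {b : n → ℝ}
    (hb : ∀ i, 0 < b i) {r : ℝ} (hMb : ∀ i, (M *ᵥ b) i ≤ r * b i) {μ : ℂ} {z : n → ℂ}
    (hz : z ≠ 0) (hμ : M.map (↑) *ᵥ z = μ • z) : ‖μ‖ ≤ r := by
  obtain ⟨i, hi⟩ := Function.ne_iff.1 hz
  obtain ⟨t, -, ht⟩ := Finset.univ.exists_max_image (fun i => ‖z i‖ / b i) ⟨i, Finset.mem_univ i⟩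
  set m := ‖z t‖ / b t
  have hm : 0 < m := (div_pos (norm_pos_iff.2 hi) (hb i)).trans_le (ht i (Finset.mem_univ i))
  have hzs : ∀ s, ‖z s‖ ≤ m * b s := fun s => (div_le_iff₀ (hb s)).1 (ht s (Finset.mem_univ s))
  have key : ‖μ‖ * (m * b t) ≤ r * (m * b t) :=
    calc ‖μ‖ * (m * b t) = ‖(M.map (↑) *ᵥ z) t‖ := by
          rw [hμ, div_mul_cancel₀ _ (hb t).ne', Pi.smul_apply, smul_eq_mul, norm_mul]
      _ = ‖∑ s, (M t s : ℂ) * z s‖ := rfl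
      _ ≤ ∑ s, M t s * ‖z s‖ := by
          refine (norm_sum_le _ _).trans_eq (Finset.sum_congr rfl fun s _ => ?_)
          rw [norm_mul, Complex.norm_real, Real.norm_of_nonneg (hM t s)]
      _ ≤ ∑ s, M t s * (m * b s) :=
          Finset.sum_le_sum fun s _ => mul_le_mul_of_nonneg_left (hzs s) (hM t s)
      _ = m * (M *ᵥ b) t := by
          rw [Matrix.mulVec, dotProduct, Finset.mul_sum]
          exact Finset.sum_congr rfl fun s _ => by ring
      _ ≤ m * (r * b t) := mul_le_mul_of_nonneg_left (hMb t) hm.le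
      _ = r * (m * b t) := by ring
  exact le_of_mul_le_mul_right key (mul_pos hm (hb t))

lemma specRad_le_of_mulVec_le [DecidableEq n] {M : Matrix n n ℝ} (hM : ∀ i j, 0 ≤ M i j)
    {b : n → ℝ} (hb : ∀ i, 0 < b i) {r : ℝ} (hr : 0 ≤ r) (hMb : ∀ i, (M *ᵥ b) i ≤ r * b i) :
    specRad M ≤ r := by
  refine Real.sSup_le ?_ hr
  rintro _ ⟨μ, hμ, rfl⟩
  obtain ⟨z, hz, hMz⟩ := Matrix.exists_mulVec_eq_smul_of_isRoot_charpoly hμ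
  exact norm_le_of_mulVec_eq_smul hM hb hMb hz hMz

lemma lambdaPF_nonneg_of_mulVec_nonneg [DecidableEq n] {B : Matrix n n ℝ}
    (hdiag : ∀ i, B i i ≤ 2) (hoff : ∀ i j, i ≠ j → B i j ≤ 0) {b : n → ℝ}
    (hb : ∀ i, 0 < b i) (hBb : ∀ i, 0 ≤ (B *ᵥ b) i) : 0 ≤ lambdaPF B := by
  have hnonneg : ∀ i j, 0 ≤ ((2 : ℝ) • (1 : Matrix n n ℝ) - B) i j := by
    intro i j
    rcases eq_or_ne i j with rfl | hij
    · simpa using hdiag i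
    · simpa [Matrix.one_apply_ne hij] using hoff i j hij
  have hle : ∀ i, (((2 : ℝ) • (1 : Matrix n n ℝ) - B) *ᵥ b) i ≤ 2 * b i := by
    intro i
    rw [Matrix.sub_mulVec, Pi.sub_apply, Matrix.smul_mulVec, Matrix.one_mulVec,
      Pi.smul_apply, smul_eq_mul]
    linarith [hBb i]
  have := specRad_le_of_mulVec_le hnonneg hb zero_le_two hle
  unfold lambdaPF
  linarith

lemma eq_zero_of_mulVec_apply_nonneg {A : Matrix n n ℝ} (hoff : ∀ i j, i ≠ j → A i j ≤ 0)
    {c : n → ℝ} (hc : ∀ i, 0 ≤ c i) {t : n} (ht : c t = 0) (hAc : 0 ≤ (A *ᵥ c) t) {s : n}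
    (hts : A t s ≠ 0) : c s = 0 := by
  have hterm : ∀ r ∈ Finset.univ, A t r * c r ≤ 0 := by
    intro r _
    rcases eq_or_ne t r with rfl | htr
    · simp [ht]
    · exact mul_nonpos_of_nonpos_of_nonneg (hoff t r htr) (hc r)
  have hsum : ∑ r, A t r * c r = 0 := le_antisymm (Finset.sum_nonpos hterm) hAc
  exact (mul_eq_zero.1 ((Finset.sum_eq_zero_iff_of_nonpos hterm).1 hsum s
    (Finset.mem_univ s))).resolve_left hts

lemma pos_of_mulVec_nonneg {A : Matrix n n ℝ} (hoff : ∀ i j, i ≠ j → A i j ≤ 0)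
    (hsym : ∀ i j, i ≠ j → (A i j = 0 ↔ A j i = 0)) (hconn : (cartanGraph A).Connected)
    {c : n → ℝ} (hc : ∀ i, 0 ≤ c i) (hAc : ∀ i, 0 ≤ (A *ᵥ c) i) {i₀ : n} (hi₀ : 0 < c i₀)
    (i : n) : 0 < c i := by
  refine (hc i).lt_of_ne' fun hi => hi₀.ne' ?_
  have hadj : ∀ u w, (cartanGraph A).Adj u w → c u = 0 → c w = 0 := fun u w huw hu =>
    eq_zero_of_mulVec_apply_nonneg hoff hc hu (hAc u)
      (huw.2.elim id (mt (hsym u w huw.1).1))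
  have hwalk : ∀ {u w} (_ : (cartanGraph A).Walk u w), c u = 0 → c w = 0 := by
    intro u w p
    induction p with
    | nil => exact id
    | cons huv _ ih => exact fun hu => ih (hadj _ _ huv hu)
  exact hwalk (hconn.preconnected i i₀).some hi

lemma IsCartanMatrix.submatrix {m S : Type*} {A : Matrix S S ℝ} (hA : IsCartanMatrix A)
    {e : m → S} (he : Function.Injective e) : IsCartanMatrix (A.submatrix e e) := by
  obtain ⟨hdiag, hoff, hsym, hprod⟩ := hA
  exact ⟨fun i => hdiag (e i), fun i j hij => hoff _ _ (he.ne hij),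
    fun i j hij => hsym _ _ (he.ne hij), fun i j hij => hprod _ _ (he.ne hij)⟩

lemma mulVec_apply_le_mulVec_submatrix_apply {m S : Type*} [Fintype m] [Fintype S]
    {A : Matrix S S ℝ} (hoff : ∀ s t, s ≠ t → A s t ≤ 0) {c : S → ℝ} (hc : ∀ s, 0 ≤ c s)
    {e : m → S} (he : Function.Injective e) (i : m) :
    (A *ᵥ c) (e i) ≤ (A.submatrix e e *ᵥ (c ∘ e)) i := by
  have hsplit := Finset.sum_add_sum_compl (Finset.univ.map ⟨e, he⟩) fun s => A (e i) s * c s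
  rw [Finset.sum_map] at hsplit
  have hcompl : ∑ s ∈ (Finset.univ.map ⟨e, he⟩)ᶜ, A (e i) s * c s ≤ 0 := by
    refine Finset.sum_nonpos fun s hs => mul_nonpos_of_nonpos_of_nonneg (hoff _ _ ?_) (hc s)
    rintro rfl
    exact Finset.mem_compl.1 hs (Finset.mem_map_of_mem _ (Finset.mem_univ i))
  change ∑ s, A (e i) s * c s ≤ ∑ j, A (e i) (e j) * c (e j)
  simp only [Function.Embedding.coeFn_mk] at hsplit
  linarith

lemma cartanGraph_submat {S : Type*} (A : Matrix S S ℝ) (T : Set S) :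
    cartanGraph (submat A T) = (cartanGraph A).induce T := by
  ext u w
  simp [cartanGraph, submat, Subtype.ext_iff]

lemma IsIrredComponent.connected_cartanGraph_submat {S : Type*} {A : Matrix S S ℝ} {U : Set S}
    (hU : IsIrredComponent A U) : (cartanGraph (submat A U)).Connected := by
  obtain ⟨C, rfl⟩ := hU
  rw [cartanGraph_submat]
  exact C.connected_toSimpleGraph

variable {S : Type*} [Fintype S] {A : Matrix S S ℝ} {T : Set S} {c : S → ℝ}

lemma IsCartanMatrix.eq_zero_of_mem_of_isNegType (hA : IsCartanMatrix A)
    (hT : IsNegType (submat A T)) (hc : ∀ s, 0 ≤ c s) (hAc : ∀ t ∈ T, 0 ≤ (A *ᵥ c) t)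
    {t : S} (ht : t ∈ T) : c t = 0 := by
  by_contra hct0
  have hct : 0 < c t := (hc t).lt_of_ne' hct0
  obtain ⟨U, hU, htU⟩ : ∃ U, IsIrredComponent (submat A T) U ∧ ⟨t, ht⟩ ∈ U :=
    ⟨_, ⟨_, rfl⟩, rfl⟩
  let e : U → S := fun u => u.1.1
  have he : Function.Injective e := fun u w h => Subtype.ext (Subtype.ext h)
  obtain ⟨hdiag, hoff, hsym, -⟩ := hA.submatrix he
  have hAc_sub : ∀ u, 0 ≤ (A.submatrix e e *ᵥ (c ∘ e)) u := fun u =>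
    (hAc _ u.1.2).trans (mulVec_apply_le_mulVec_submatrix_apply hA.2.1 hc he u)
  have hpos : ∀ u, 0 < c (e u) :=
    pos_of_mulVec_nonneg hoff hsym hU.connected_cartanGraph_submat (fun _ => hc _)
      hAc_sub (i₀ := ⟨⟨t, ht⟩, htU⟩) hct
  have hnonneg := lambdaPF_nonneg_of_mulVec_nonneg (fun i => (hdiag i).le) hoff hpos hAc_sub
  -- `hT` carries classical `DecidableEq` instances; `convert` identifies them with ours.
  have hU_neg : lambdaPF (A.submatrix e e) < 0 := by
    convert hT U hU using 2
    rfl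
  exact hU_neg.not_ge hnonneg

lemma IsCartanMatrix.eq_zero_of_notMem_perpSet (hA : IsCartanMatrix A)
    (hT : IsNegType (submat A T)) (hc : ∀ s, 0 ≤ c s) (hAc : ∀ t ∈ T, 0 ≤ (A *ᵥ c) t)
    {s : S} (hs : s ∉ perpSet A T) : c s = 0 := by
  obtain ⟨t, ht, hst⟩ : ∃ t ∈ T, A s t ≠ 0 := by simpa [perpSet] using hs
  have hct := hA.eq_zero_of_mem_of_isNegType hT hc hAc ht
  obtain ⟨-, hoff, hsym, -⟩ := hA
  rcases eq_or_ne s t with rfl | hne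
  · exact hct
  · exact eq_zero_of_mulVec_apply_nonneg hoff hc hct (hAc t ht) (mt (hsym s t hne).2 hst)

end CartanMatrix

lemma IsFace.subset {V : Type*} [NormedAddCommGroup V] [NormedSpace ℝ V] {P f : Set (ℙ ℝ V)}
    (hf : IsFace P f) : f ⊆ P := by
  obtain ⟨x, -, rfl⟩ := hf
  exact fun y hy => hy.1

namespace CoxPolytope

variable {S V : Type*} [NormedAddCommGroup V] [NormedSpace ℝ V] (CP : CoxPolytope S V)

lemma α_sum_smul_v [Fintype S] (c : S → ℝ) (t : S) :
    CP.α t (∑ s, c s • CP.v s) = (CP.A *ᵥ c) t := by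
  simp [Matrix.mulVec, dotProduct, A, mul_comm]

lemma α_eq_zero_of_mem_spanFace {f : Set (ℙ ℝ V)} {t : S} (ht : t ∈ CP.SfaceSet f) {x : V}
    (hx : x ∈ spanFace f) : CP.α t x = 0 := by
  have hle : spanFace f ≤ LinearMap.ker (CP.α t) :=
    Submodule.span_le.2 fun w ⟨hw, hwf⟩ => ht w hw hwf
  exact hle hx

lemma inter_spanFace_subset_nonnegCone_perpSet [Fintype S]
    (hΔ : CP.Δ ⊆ CP.nonnegCone Set.univ) {f : Set (ℙ ℝ V)} (hf : CP.FaceNeg f) :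
    CP.Δ ∩ (spanFace f : Set V) ⊆ CP.nonnegCone (perpSet CP.A (CP.SfaceSet f)) := by
  rintro x ⟨hxΔ, hxf⟩
  obtain ⟨c, hc, -, rfl⟩ := hΔ hxΔ
  refine ⟨c, hc, fun s hs => CP.cartan.eq_zero_of_notMem_perpSet hf hc (fun t ht => ?_) hs, rfl⟩
  exact ((CP.α_sum_smul_v c t).symm.trans (CP.α_eq_zero_of_mem_spanFace ht hxf)).ge

lemma subset_projSet_of_inter_spanFace_subset {f : Set (ℙ ℝ V)} (hf : f ⊆ CP.poly)
    {C : Set V} (hC : CP.Δ ∩ (spanFace f : Set V) ⊆ C) : f ⊆ projSet (C \ {0}) := by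
  intro y hy
  obtain ⟨w, ⟨hwΔ, hw0⟩, hw, rfl⟩ := hf hy
  exact ⟨w, ⟨hC ⟨hwΔ, Submodule.subset_span ⟨hw, hy⟩⟩, hw0⟩, hw, rfl⟩

end CoxPolytope

theorem statement_13_general {S : Type} [Fintype S]
    {V : Type} [NormedAddCommGroup V] [NormedSpace ℝ V]
    (CP : CoxPolytope S V)
    (hΔ : CP.Δ ⊆ CP.nonnegCone Set.univ)
    (f : Set (ℙ ℝ V)) (hf : IsFace CP.poly f)
    (hfneg : CP.FaceNeg f) :
    CP.Δ ∩ (spanFace f : Set V) ⊆ CP.nonnegCone (perpSet CP.A (CP.SfaceSet f)) ∧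
      f ⊆ projSet (CP.nonnegCone (perpSet CP.A (CP.SfaceSet f)) \ {0}) := by
  have hcone := CP.inter_spanFace_subset_nonnegCone_perpSet hΔ hfneg
  exact ⟨hcone, CP.subset_projSet_of_inter_spanFace_subset hf.subset hcone⟩

/-- **Claim.** Let `P ⊆ ℙ(V)` be an irreducible Coxeter polytope of negative type with
`Δ ⊆ Σ_{s∈S} ℝ_{≥0}·v_s`. Then every nonempty proper face `f` of `P` of negative type
satisfies `Δ ∩ Span f ⊆ Σ_{s ∈ S_f^⊥} ℝ_{≥0}·v_s`; in particular
`f ⊆ ℙ(Σ_{s ∈ S_f^⊥} ℝ_{≥0}·v_s ∖ {0})`. -/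
theorem statement_13 {S : Type} [Fintype S] [DecidableEq S] [Nonempty S]
    {V : Type} [NormedAddCommGroup V] [NormedSpace ℝ V] [FiniteDimensional ℝ V]
    (hdim : 2 ≤ Module.finrank ℝ V)
    (CP : CoxPolytope S V) (hirr : (cartanGraph CP.A).Connected) (hneg : IsNegType CP.A)
    (hΔ : CP.Δ ⊆ CP.nonnegCone Set.univ)
    (f : Set (ℙ ℝ V)) (hf : IsFace CP.poly f) (hfne : f.Nonempty)
    (hfp : f ≠ interior CP.poly) (hfneg : CP.FaceNeg f) :
    CP.Δ ∩ (spanFace f : Set V) ⊆ CP.nonnegCone (perpSet CP.A (CP.SfaceSet f)) ∧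
      f ⊆ projSet (CP.nonnegCone (perpSet CP.A (CP.SfaceSet f)) \ {0}) :=
  statement_13_general CP hΔ f hf hfneg
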